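/- arXiv:2005.03874 — 8 statements merged into one kernel-verified Lean document; each statement's English description precedes it below -/
import Mathlib

section
/- For every positive integer m, every natural number ν with 0 ≤ ν ≤ m, and every rational x, one has ∑_{k=0, k+m odd}^{m-1} C(m,k)·C(k+m,ν)·C(k+m−ν, m−ν)·B_k(x) = (1/2)·∑_{j=0}^{m-1} (−1)^{j+m+1}·C(m,j+1)·C(j+m,ν)·C(j+m−ν, m−ν)·(j+m+1)·x^j, where the sum on the left runs only over those indices k in {0,…,m−1} for which k+m is odd. -/
/-!
Write `A k = C(m,k) C(m+k,m)`, so that `Q = ∑ (-1)^k A k X^k` is the shifted Legendre polynomial,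
and let `U` be the `ℚ`-linear umbral map `X^n ↦ B_n`. Since the Bernoulli polynomials form an
Appell sequence, `U` commutes with the shift `X ↦ 1 + X`, and `B_n(1 + X) - B_n = n X^(n-1)` says
that `U q (1 + X) - U q = q'`. For `ν = m`, twice the left-hand side is the value at `x` of
`U (Q(-X)) - (-1)^m U Q`, and the symmetry `Q(1 - X) = (-1)^m Q` of the Legendre polynomial
turns `Q(-X)` into `(-1)^m Q(1 + X)`; hence it equals `(-1)^m Q'(x)`, which expands to twice the
right-hand side. The general case follows from `C(k+m,ν) C(k+m-ν,m-ν) = C(m,ν) C(k+m,m)`.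
-/

open Finset Polynomial

lemma sum_range_succ_one_sub_neg_one_pow_smul {R M : Type*} [Ring R] [AddCommGroup M] [Module R M]
    (m : ℕ) (f : ℕ → M) :
    ∑ k ∈ range (m + 1), (1 - (-1 : R) ^ (k + m)) • f k =
      (2 : R) • ∑ k ∈ (range m).filter (fun k => Odd (k + m)), f k := by
  rw [sum_range_succ, ← two_mul, pow_mul, neg_one_sq, one_pow, sub_self, zero_smul, add_zero,
    sum_filter, smul_sum]
  refine sum_congr rfl fun k _ => ?_
  rcases Nat.even_or_odd (k + m) with h | h
  · rw [h.neg_one_pow, sub_self, zero_smul, if_neg (Nat.not_odd_iff_even.mpr h), smul_zero]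
  · rw [h.neg_one_pow, sub_neg_eq_add, one_add_one_eq_two, if_pos h]

namespace Polynomial

noncomputable def bernoulliUmbral : ℚ[X] →ₗ[ℚ] ℚ[X] :=
  lsum fun n => LinearMap.toSpanSingleton ℚ ℚ[X] (bernoulli n)

@[simp]
lemma bernoulliUmbral_monomial (n : ℕ) (a : ℚ) :
    bernoulliUmbral (monomial n a) = a • bernoulli n := by
  simp [bernoulliUmbral, sum_monomial_index]

lemma bernoulliUmbral_C_mul_X_pow (n : ℕ) (a : ℚ) :
    bernoulliUmbral (C a * X ^ n) = a • bernoulli n := by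
  rw [C_mul_X_pow_eq_monomial, bernoulliUmbral_monomial]

theorem bernoulli_comp_one_add_X_eq_sum (n : ℕ) :
    (bernoulli n).comp (1 + X) = ∑ i ∈ range (n + 1), (n.choose i : ℚ) • bernoulli i := by
  cases n with
  | zero => simp
  | succ n =>
    rw [bernoulli_comp_one_add_X, sum_range_succ, Nat.choose_self, Nat.cast_one, one_smul,
      add_comm, Nat.add_sub_cancel, sum_bernoulli, ← C_mul_X_pow_eq_monomial]
    simp

lemma bernoulliUmbral_comp_one_add_X (q : ℚ[X]) :
    bernoulliUmbral (q.comp (1 + X)) = (bernoulliUmbral q).comp (1 + X) := by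
  induction q using Polynomial.induction_on' with
  | add p q hp hq => simp only [add_comp, map_add, hp, hq]
  | monomial n a =>
    rw [← C_mul_X_pow_eq_monomial, mul_comp, C_comp, X_pow_comp, bernoulliUmbral_C_mul_X_pow,
      smul_comp, bernoulli_comp_one_add_X_eq_sum, add_comm (1 : ℚ[X]), add_pow, mul_sum, map_sum,
      smul_sum]
    refine sum_congr rfl fun i _ => ?_
    rw [one_pow, mul_one, mul_comm (X ^ i), ← mul_assoc, ← C_eq_natCast, ← C_mul,
      bernoulliUmbral_C_mul_X_pow, smul_smul]

lemma bernoulliUmbral_comp_one_add_X_sub_self (q : ℚ[X]) :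
    (bernoulliUmbral q).comp (1 + X) - bernoulliUmbral q = derivative q := by
  induction q using Polynomial.induction_on' with
  | add p q hp hq => rw [map_add, add_comp, derivative_add, ← hp, ← hq]; abel
  | monomial n a =>
    rw [bernoulliUmbral_monomial, smul_comp, bernoulli_comp_one_add_X, ← smul_sub,
      add_sub_cancel_left, derivative_monomial, ← C_mul_X_pow_eq_monomial, C_mul, nsmul_eq_mul,
      smul_eq_C_mul]
    simp [mul_assoc]

lemma shiftedLegendre_comp_neg_X (n : ℕ) :
    (shiftedLegendre n).comp (-X) = (-1) ^ n * (shiftedLegendre n).comp (1 + X) := by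
  have h := congr($(neg_one_pow_mul_shiftedLegendre_comp_one_sub_X_eq n).comp (1 + X))
  rw [mul_comp, comp_assoc] at h
  simp only [pow_comp, neg_comp, one_comp, sub_comp, X_comp, sub_add_cancel_left] at h
  rw [← h, ← mul_assoc, ← pow_add, Even.neg_one_pow ⟨n, rfl⟩, one_mul]

lemma derivative_shiftedLegendre (m : ℕ) :
    derivative (shiftedLegendre m) = ∑ j ∈ range m,
      C ((-1 : ℤ) ^ (j + 1) * m.choose (j + 1) * (m + j).choose m * (m + j + 1)) * X ^ j := by
  rw [shiftedLegendre, derivative_sum, sum_range_succ']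
  simp only [derivative_C_mul_X_pow, Nat.cast_zero, mul_zero, C_0, zero_mul, add_zero,
    Nat.add_sub_cancel]
  refine sum_congr rfl fun j _ => ?_
  have h := Nat.choose_mul_succ_eq (m + j) m
  rw [show m + j + 1 - m = j + 1 by omega] at h
  have h' : ((m + (j + 1)).choose m : ℤ) * (j + 1) = (m + j).choose m * (m + j + 1) := by
    rw [← add_assoc]
    exact_mod_cast h.symm
  congr 2
  push_cast
  linear_combination (-1) ^ (j + 1) * (m.choose (j + 1) : ℤ) * h'

theorem two_smul_sum_odd_bernoulli_eq_derivative_shiftedLegendre (m : ℕ) :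
    (2 : ℚ) • ∑ k ∈ (range m).filter (fun k => Odd (k + m)),
        ((m.choose k : ℚ) * (m + k).choose m) • bernoulli k =
      (-1 : ℚ) ^ m • derivative ((shiftedLegendre m).map (Int.castRingHom ℚ)) := by
  set Q := (shiftedLegendre m).map (Int.castRingHom ℚ)
  have hsym : Q.comp (-X) = (-1 : ℚ) ^ m • Q.comp (1 + X) := by
    have h := congr(map (Int.castRingHom ℚ) $(shiftedLegendre_comp_neg_X m))
    simp only [Polynomial.map_comp, Polynomial.map_mul, Polynomial.map_pow, Polynomial.map_neg,
      Polynomial.map_one, Polynomial.map_add, map_X] at h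
    rw [h, smul_eq_C_mul, C_pow, C_neg, C_1]
  have hQ : Q = ∑ k ∈ range (m + 1),
      C ((-1 : ℚ) ^ k * m.choose k * (m + k).choose m) * X ^ k := by
    simp [Q, shiftedLegendre, Polynomial.map_sum]
  have hQneg : Q.comp (-X) = ∑ k ∈ range (m + 1),
      C ((m.choose k : ℚ) * (m + k).choose m) * X ^ k := by
    rw [hQ, sum_comp]
    refine sum_congr rfl fun k _ => ?_
    have hsq : ((-1 : ℚ[X]) ^ k) * (-1) ^ k = 1 := by rw [← mul_pow]; simp
    simp only [mul_comp, C_comp, X_comp, neg_pow (X : ℚ[X]), map_mul, map_pow, map_neg, map_one,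
      pow_comp, neg_comp, one_comp]
    linear_combination (C (m.choose k : ℚ) * C ((m + k).choose m : ℚ) * X ^ k) * hsq
  calc _ = ∑ k ∈ range (m + 1), (1 - (-1 : ℚ) ^ (k + m)) •
        (((m.choose k : ℚ) * (m + k).choose m) • bernoulli k) :=
        (sum_range_succ_one_sub_neg_one_pow_smul m _).symm
    _ = bernoulliUmbral (Q.comp (-X)) - (-1 : ℚ) ^ m • bernoulliUmbral Q := by
      rw [hQneg, hQ]
      simp only [map_sum, bernoulliUmbral_C_mul_X_pow, smul_sum, ← sum_sub_distrib]
      refine sum_congr rfl fun k _ => ?_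
      rw [smul_smul, smul_smul, ← sub_smul, pow_add]
      congr 1
      ring
    _ = (-1 : ℚ) ^ m • ((bernoulliUmbral Q).comp (1 + X) - bernoulliUmbral Q) := by
      rw [hsym, map_smul, bernoulliUmbral_comp_one_add_X, smul_sub]
    _ = (-1 : ℚ) ^ m • derivative Q := by rw [bernoulliUmbral_comp_one_add_X_sub_self]

end Polynomial

theorem alzer_kwong_extension_1_general (m : ℕ) (ν : ℕ) (hν : ν ≤ m) (x : ℚ) :
    ∑ k ∈ (Finset.range m).filter (fun k => Odd (k + m)),
      (m.choose k : ℚ) * ((k + m).choose ν) * ((k + m - ν).choose (m - ν)) *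
        (Polynomial.bernoulli k).eval x
    = (1 / 2) * ∑ j ∈ Finset.range m,
        (-1 : ℚ) ^ (j + m + 1) * (m.choose (j + 1)) * ((j + m).choose ν) *
          ((j + m - ν).choose (m - ν)) * (j + m + 1) * x ^ j := by
  have hchoose (k : ℕ) :
      ((k + m).choose ν * (k + m - ν).choose (m - ν) : ℚ) = m.choose ν * (m + k).choose m := by
    rw [add_comm m k, mul_comm (m.choose ν : ℚ)]
    exact_mod_cast (Nat.choose_mul hν).symm
  have h := congr(eval x $(two_smul_sum_odd_bernoulli_eq_derivative_shiftedLegendre m))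
  simp only [eval_smul, eval_finsetSum, smul_eq_mul] at h
  calc _ = m.choose ν * ∑ k ∈ (range m).filter (fun k => Odd (k + m)),
        (m.choose k : ℚ) * (m + k).choose m * (Polynomial.bernoulli k).eval x := by
        rw [mul_sum]
        refine sum_congr rfl fun k _ => ?_
        linear_combination (m.choose k : ℚ) * (Polynomial.bernoulli k).eval x * hchoose k
    _ = m.choose ν * ((1 / 2) * ((-1) ^ m *
          (derivative ((shiftedLegendre m).map (Int.castRingHom ℚ))).eval x)) := by
        rw [← h]
        ring
    _ = _ := by
        rw [derivative_map, derivative_shiftedLegendre]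
        simp only [eval_map, eval₂_finsetSum, eval₂_mul, eval₂_C, eval₂_X_pow, Int.coe_castRingHom,
          mul_sum]
        push_cast
        refine sum_congr rfl fun j _ => ?_
        linear_combination (2⁻¹ * (-1) ^ (j + m + 1) * m.choose (j + 1) * (j + m + 1) * x ^ j : ℚ) *
          (hchoose j).symm

theorem alzer_kwong_extension_1 (m : ℕ) (hm : 0 < m) (ν : ℕ) (hν : ν ≤ m) (x : ℚ) :
    ∑ k ∈ (Finset.range m).filter (fun k => Odd (k + m)),
      (m.choose k : ℚ) * ((k + m).choose ν) * ((k + m - ν).choose (m - ν)) *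
        (Polynomial.bernoulli k).eval x
    = (1 / 2) * ∑ j ∈ Finset.range m,
        (-1 : ℚ) ^ (j + m + 1) * (m.choose (j + 1)) * ((j + m).choose ν) *
          ((j + m - ν).choose (m - ν)) * (j + m + 1) * x ^ j :=
  alzer_kwong_extension_1_general m ν hν x
end

section
/- For every positive integer m, every natural number ν with 0 ≤ ν ≤ m−1, and every rational x, one has ∑_{k=0, k+m odd}^{m-1} C(m,k)·C(k+m,ν)·C(k+m−ν, m−ν−1)·B_{k+1}(x) = (1/2)·∑_{j=0}^{m} (−1)^{j+m}·C(m,j)·C(j+m−1,ν)·C(j+m−ν−1, m−ν−1)·(j+m)·x^j, where the sum on the left runs only over those indices k in {0,…,m−1} for which k+m is odd. -/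
/-!
Both sides are polynomials in `x`, and both carry the common factor `C(m-1, ν)`; what remains
is an identity `L = R` between a combination `L` of Bernoulli polynomials and a polynomial `R`.
A polynomial is determined by its forward difference `p(x+1) - p(x)` together with its mean
`∫₀¹ p`. Since `B_{k+1}(x+1) - B_{k+1}(x) = (k+1) xᵏ` and `∫₀¹ B_{k+1} = 0`, this reduces the
identity to two finite alternating binomial sums, `R(x+1) = Σᵢ m C(m,i) C(i+m,m) xⁱ / 2` and
`∫₀¹ R = 0`. Both are iterated forward differences of `n ↦ C(n, q)`.
-/

open Finset Polynomial

theorem fwdDiff_iter_one_eq_sum (f : ℕ → ℤ) (N y : ℕ) :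
    (fwdDiff 1)^[N] f y = ∑ s ∈ range (N + 1), (-1 : ℤ) ^ (s + N) * N.choose s * f (y + s) := by
  rw [fwdDiff_iter_eq_sum_shift]
  refine sum_congr rfl fun s hs ↦ ?_
  rw [show s + N = (N - s) + 2 * s by grind, pow_add, pow_mul]
  simp

theorem sum_range_neg_one_pow_mul_choose_mul_choose_add (N j y : ℕ) :
    ∑ s ∈ range (N + 1), (-1 : ℤ) ^ (s + N) * N.choose s * (y + s).choose (N + j) =
      y.choose j := by
  rw [← fwdDiff_iter_one_eq_sum (fun x ↦ (x.choose (N + j) : ℤ)), fwdDiff_iter_choose]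

theorem sum_range_neg_one_pow_mul_choose_mul_choose_add_eq_zero_of_lt {q N : ℕ} (h : q < N)
    (y : ℕ) : ∑ s ∈ range (N + 1), (-1 : ℤ) ^ (s + N) * N.choose s * (y + s).choose q = 0 := by
  obtain ⟨r, rfl⟩ := Nat.exists_eq_add_of_lt h
  have hconst := fwdDiff_iter_choose 0 q
  simp only [add_zero, Nat.choose_zero_right, Nat.cast_one] at hconst
  have hΔ : (fwdDiff 1)^[q + r + 1] (fun x : ℕ ↦ (x.choose q : ℤ)) = 0 := by
    rw [show q + r + 1 = r + 1 + q by ring, Function.iterate_add_apply, hconst,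
      Function.iterate_succ_apply, fwdDiff_const]
    exact Function.iterate_fixed (fwdDiff_const 1 0) r
  rw [← fwdDiff_iter_one_eq_sum (fun x ↦ (x.choose q : ℤ)), hΔ, Pi.zero_apply]

theorem sum_range_neg_one_pow_mul_choose_mul_choose_mul_choose {i m : ℕ} (him : i ≤ m) :
    ∑ j ∈ range (m + 1), (-1 : ℤ) ^ (j + m) * m.choose j * j.choose i * (j + m).choose m =
      m.choose i * (i + m).choose i := by
  obtain ⟨N, rfl⟩ := Nat.exists_eq_add_of_le him
  have hterm (s : ℕ) : (-1 : ℤ) ^ (i + s + (i + N)) * (i + N).choose (i + s) * (i + s).choose i *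
      (i + s + (i + N)).choose (i + N) =
      (i + N).choose i * ((-1 : ℤ) ^ (s + N) * N.choose s * (i + (i + N) + s).choose (N + i)) := by
    have h := Nat.choose_mul (n := i + N) (Nat.le_add_right i s)
    simp only [Nat.add_sub_cancel_left] at h
    have hq : ((i + N).choose (i + s) : ℤ) * (i + s).choose i = (i + N).choose i * N.choose s := by
      exact_mod_cast h
    rw [show i + s + (i + N) = (s + N) + 2 * i by ring, pow_add, pow_mul,
      show i + (i + N) + s = s + N + 2 * i by ring, add_comm N i]
    linear_combination (-1 : ℤ) ^ (s + N) * (s + N + 2 * i).choose (i + N) * hq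
  rw [show i + N + 1 = i + (N + 1) by ring, sum_range_add, sum_eq_zero fun j hj ↦ by
      rw [Nat.choose_eq_zero_of_lt (mem_range.mp hj)]; simp,
    zero_add, sum_congr rfl fun s _ ↦ hterm s, ← mul_sum,
    sum_range_neg_one_pow_mul_choose_mul_choose_add]

theorem sum_range_neg_one_pow_mul_choose_succ_mul_choose_eq_zero {m : ℕ} (hm : 0 < m) :
    ∑ j ∈ range (m + 1), (-1 : ℤ) ^ (j + m) * (m + 1).choose (j + 1) * (j + m).choose m = 0 := by
  have h := sum_range_neg_one_pow_mul_choose_mul_choose_add_eq_zero_of_lt (Nat.lt_add_one m) (m - 1)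
  rw [sum_range_succ', Nat.choose_eq_zero_of_lt (by omega : m - 1 + 0 < m)] at h
  simp only [Nat.cast_zero, mul_zero, add_zero] at h
  refine (sum_congr rfl fun j _ ↦ ?_).trans h
  rw [show m - 1 + (j + 1) = j + m by omega, show j + 1 + (m + 1) = j + m + 2 by omega,
    pow_add _ (j + m) 2, neg_one_sq, mul_one]

theorem sum_range_neg_one_pow_mul_choose_mul_choose_div_eq_zero {m : ℕ} (hm : 0 < m) :
    ∑ j ∈ range (m + 1), (-1 : ℚ) ^ (j + m) * m.choose j * (j + m).choose m / (j + 1) = 0 := by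
  have h := sum_range_neg_one_pow_mul_choose_succ_mul_choose_eq_zero hm
  rw [← Int.cast_inj (α := ℚ)] at h
  push_cast at h
  refine (mul_eq_zero.mp ?_).resolve_left (by positivity : (m + 1 : ℚ) ≠ 0)
  rw [mul_sum]
  refine (sum_congr rfl fun j _ ↦ ?_).trans h
  have hj : ((m + 1 : ℕ) : ℚ) * m.choose j = (m + 1).choose (j + 1) * (j + 1 : ℕ) := by
    exact_mod_cast Nat.add_one_mul_choose_eq m j
  push_cast at hj
  field_simp
  linear_combination ((j + m).choose m : ℚ) * hj

theorem Nat.choose_sub_one_mul_add_one {m : ℕ} (hm : 0 < m) (k : ℕ) :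
    (k + m).choose (m - 1) * (k + 1) = (k + m).choose m * m := by
  obtain ⟨n, rfl⟩ := Nat.exists_eq_add_of_lt hm
  simp only [zero_add, Nat.add_sub_cancel]
  rw [Nat.choose_symm_of_eq_add (show k + (n + 1) = n + (k + 1) by ring), Nat.choose_succ_right_eq,
    Nat.choose_symm_add]
  congr 1
  omega

theorem add_one_pow_eq_sum_range_choose_mul_pow {R : Type*} [CommSemiring R] {j n : ℕ}
    (h : j ≤ n) (x : R) : (x + 1) ^ j = ∑ i ∈ range (n + 1), (j.choose i : R) * x ^ i := by
  rw [add_pow]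
  refine sum_subset (range_subset_range.2 (by omega)) (fun i _ hi ↦ ?_) |>.trans
    (sum_congr rfl fun i _ ↦ by rw [one_pow, mul_one, mul_comm])
  rw [Nat.choose_eq_zero_of_lt (by simpa using hi)]
  simp

namespace Polynomial

theorem eq_C_eval_zero_of_periodic {R : Type*} [CommRing R] [IsDomain R] [CharZero R]
    {p : R[X]} (hp : Function.Periodic (fun x ↦ p.eval x) 1) : p = C (p.eval 0) :=
  eq_of_infinite_eval_eq _ _ <| (Set.infinite_range_of_injective Nat.cast_injective).mono <| by
    rintro _ ⟨n, rfl⟩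
    simpa using hp.nat_mul_eq n

/-- `P` and `Q` are antiderivatives, so `hmean` says `∫₀¹ p = ∫₀¹ q`. -/
theorem eq_of_eval_add_one_sub_eq {K : Type*} [Field K] [CharZero K] {p q P Q : K[X]}
    (hdiff : ∀ x, p.eval (x + 1) - p.eval x = q.eval (x + 1) - q.eval x)
    (hP : derivative P = p) (hQ : derivative Q = q)
    (hmean : P.eval 1 - P.eval 0 = Q.eval 1 - Q.eval 0) : p = q := by
  set c := (p - q).eval 0
  have hconst : p - q = C c :=
    eq_C_eval_zero_of_periodic fun x ↦ by simp only [eval_sub]; linear_combination hdiff x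
  have hlin : derivative (P - Q - C c * X) = 0 := by
    rw [derivative_sub, derivative_sub, hP, hQ, derivative_C_mul_X, hconst, sub_self]
  have hc : c = 0 := by
    have h := eq_C_of_derivative_eq_zero hlin
    have h1 := congrArg (eval 1) h
    have h0 := congrArg (eval 0) h
    simp only [eval_sub, eval_mul, eval_C, eval_X] at h1 h0
    linear_combination hmean - h1 + h0
  rw [← sub_eq_zero, hconst, hc, map_zero]

theorem derivative_C_div_mul_X_pow_succ {K : Type*} [Field K] [CharZero K] (a : K) (j : ℕ) :
    derivative (C (a / (j + 1)) * X ^ (j + 1)) = C a * X ^ j := by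
  rw [derivative_C_mul_X_pow, Nat.add_sub_cancel, Nat.cast_add_one,
    div_mul_cancel₀ a (Nat.cast_add_one_ne_zero j)]

theorem derivative_C_div_mul_bernoulli (a : ℚ) (k : ℕ) :
    derivative (C (a / (k + 2)) * bernoulli (k + 2)) = C a * bernoulli (k + 1) := by
  rw [derivative_C_mul, derivative_bernoulli_add_one, ← mul_assoc]
  congr 1
  rw [← C_eq_natCast, ← C_1, ← C_add, ← C_mul]
  congr 1
  push_cast
  field_simp
  ring

theorem bernoulli_eval_one_eq_eval_zero {n : ℕ} (hn : n ≠ 1) :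
    (bernoulli n).eval 1 = (bernoulli n).eval 0 := by
  rw [bernoulli_eval_one, bernoulli_eval_zero, _root_.bernoulli_eq_bernoulli'_of_ne_one hn]

end Polynomial

namespace AlzerKwong

noncomputable def bernoulliSide (m : ℕ) : ℚ[X] :=
  ∑ k ∈ (range m).filter (fun k ↦ Odd (k + m)),
    C ((m.choose k : ℚ) * (k + m).choose (m - 1)) * Polynomial.bernoulli (k + 1)

noncomputable def powerSide (m : ℕ) : ℚ[X] :=
  ∑ j ∈ range (m + 1), C ((-1 : ℚ) ^ (j + m) * m.choose j * (m * (j + m).choose m) / 2) * X ^ j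

theorem bernoulliSide_eval_add_one_sub (m : ℕ) (x : ℚ) :
    (bernoulliSide m).eval (x + 1) - (bernoulliSide m).eval x =
      ∑ k ∈ (range m).filter (fun k ↦ Odd (k + m)),
        (m.choose k : ℚ) * (k + m).choose (m - 1) * (k + 1) * x ^ k := by
  simp only [bernoulliSide, eval_finsetSum, eval_mul, eval_C, ← sum_sub_distrib, add_comm x 1,
    bernoulli_eval_one_add]
  refine sum_congr rfl fun k _ ↦ ?_
  push_cast
  ring

theorem powerSide_eval_add_one (m : ℕ) (x : ℚ) :
    (powerSide m).eval (x + 1) =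
      ∑ i ∈ range (m + 1), (m.choose i : ℚ) * (m * (i + m).choose m) / 2 * x ^ i := by
  simp only [powerSide, eval_finsetSum, eval_mul, eval_C, eval_pow, eval_X]
  rw [sum_congr rfl fun j hj ↦ by
      rw [add_one_pow_eq_sum_range_choose_mul_pow (Nat.lt_succ_iff.mp (mem_range.mp hj)),
        mul_sum],
    sum_comm]
  refine sum_congr rfl fun i hi ↦ ?_
  have h := sum_range_neg_one_pow_mul_choose_mul_choose_mul_choose
    (Nat.lt_succ_iff.mp (mem_range.mp hi))
  rw [Nat.choose_symm_add, ← Int.cast_inj (α := ℚ)] at h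
  push_cast at h
  calc _ = (∑ j ∈ range (m + 1), (-1 : ℚ) ^ (j + m) * m.choose j * j.choose i * (j + m).choose m)
        * (m / 2 * x ^ i) := by
        rw [sum_mul]
        refine sum_congr rfl fun j _ ↦ ?_
        ring
    _ = _ := by rw [h]; ring

theorem powerSide_eval_add_one_sub {m : ℕ} (hm : 0 < m) (x : ℚ) :
    (powerSide m).eval (x + 1) - (powerSide m).eval x =
      ∑ k ∈ (range m).filter (fun k ↦ Odd (k + m)),
        (m.choose k : ℚ) * (k + m).choose (m - 1) * (k + 1) * x ^ k := by
  rw [powerSide_eval_add_one]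
  simp only [powerSide, eval_finsetSum, eval_mul, eval_C, eval_pow, eval_X, ← sum_sub_distrib,
    sum_filter]
  rw [sum_range_succ, (by simp : Even (m + m)).neg_one_pow, sub_eq_zero_of_eq (by ring), add_zero]
  refine sum_congr rfl fun k _ ↦ ?_
  have h : ((k + m).choose (m - 1) : ℚ) * (k + 1) = (k + m).choose m * m := by
    exact_mod_cast Nat.choose_sub_one_mul_add_one hm k
  split_ifs with hk
  · rw [hk.neg_one_pow]
    linear_combination -(m.choose k : ℚ) * x ^ k * h
  · rw [(Nat.not_odd_iff_even.mp hk).neg_one_pow]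
    ring

theorem bernoulliSide_eq_powerSide {m : ℕ} (hm : 0 < m) : bernoulliSide m = powerSide m := by
  set b : ℕ → ℚ := fun k ↦ m.choose k * (k + m).choose (m - 1)
  set p : ℕ → ℚ := fun j ↦ (-1 : ℚ) ^ (j + m) * m.choose j * (m * (j + m).choose m) / 2
  refine eq_of_eval_add_one_sub_eq
    (P := ∑ k ∈ (range m).filter (fun k ↦ Odd (k + m)),
      C (b k / (k + 2)) * Polynomial.bernoulli (k + 2))
    (Q := ∑ j ∈ range (m + 1), C (p j / (j + 1)) * X ^ (j + 1))
    (fun x ↦ by rw [bernoulliSide_eval_add_one_sub, powerSide_eval_add_one_sub hm])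
    (by simp only [derivative_sum, derivative_C_div_mul_bernoulli]; rfl)
    (by simp only [derivative_sum, derivative_C_div_mul_X_pow_succ]; rfl) ?_
  have hb (k : ℕ) :
      (Polynomial.bernoulli (k + 2)).eval 1 = (Polynomial.bernoulli (k + 2)).eval 0 :=
    bernoulli_eval_one_eq_eval_zero (by omega)
  have hp := sum_range_neg_one_pow_mul_choose_mul_choose_div_eq_zero hm
  simp only [eval_finsetSum, eval_mul, eval_C, eval_pow, eval_X, hb, sub_self, one_pow, mul_one,
    zero_pow (Nat.succ_ne_zero _), mul_zero, sum_const_zero]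
  rw [sub_zero, eq_comm, ← mul_zero ((m : ℚ) / 2), ← hp, mul_sum]
  refine sum_congr rfl fun j _ ↦ ?_
  simp only [p]
  ring

end AlzerKwong

open AlzerKwong in
theorem alzer_kwong_extension_2_general (m : ℕ) (ν : ℕ) (hν : ν + 1 ≤ m) (x : ℚ) :
    ∑ k ∈ (Finset.range m).filter (fun k => Odd (k + m)),
      (m.choose k : ℚ) * ((k + m).choose ν) * ((k + m - ν).choose (m - ν - 1)) *
        (Polynomial.bernoulli (k + 1)).eval x
    = (1 / 2) * ∑ j ∈ Finset.range (m + 1),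
        (-1 : ℚ) ^ (j + m) * (m.choose j) * ((j + m - 1).choose ν) *
          ((j + m - ν - 1).choose (m - ν - 1)) * (j + m) * x ^ j := by
  have hm : 0 < m := by omega
  have hνm : ν ≤ m - 1 := by omega
  have hsplit (n : ℕ) : (n.choose ν : ℚ) * (n - ν).choose (m - ν - 1) =
      (m - 1).choose ν * n.choose (m - 1) := by
    rw [Nat.sub_right_comm m ν 1]
    exact_mod_cast (Nat.choose_mul hνm).symm.trans (mul_comm _ _)
  have habsorb (j : ℕ) : ((j + m - 1).choose (m - 1) : ℚ) * (j + m) = (j + m).choose m * m := by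
    have h := Nat.add_one_mul_choose_eq (j + m - 1) (m - 1)
    rw [Nat.sub_add_cancel (by omega), Nat.sub_add_cancel hm] at h
    rw [mul_comm]
    exact_mod_cast h
  calc _ = (m - 1).choose ν * (bernoulliSide m).eval x := by
        simp only [bernoulliSide, eval_finsetSum, eval_mul, eval_C, mul_sum]
        refine sum_congr rfl fun k _ ↦ ?_
        linear_combination
          (m.choose k : ℚ) * (Polynomial.bernoulli (k + 1)).eval x * hsplit (k + m)
    _ = (m - 1).choose ν * (powerSide m).eval x := by rw [bernoulliSide_eq_powerSide hm]
    _ = _ := by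
        simp only [powerSide, eval_finsetSum, eval_mul, eval_C, eval_pow, eval_X, mul_sum]
        refine sum_congr rfl fun j _ ↦ ?_
        rw [Nat.sub_right_comm (j + m) ν 1]
        linear_combination (-(-1 : ℚ) ^ (j + m) * m.choose j * x ^ j / 2) *
          ((j + m) * hsplit (j + m - 1) + (m - 1).choose ν * habsorb j)

theorem alzer_kwong_extension_2 (m : ℕ) (hm : 0 < m) (ν : ℕ) (hν : ν + 1 ≤ m) (x : ℚ) :
    ∑ k ∈ (Finset.range m).filter (fun k => Odd (k + m)),
      (m.choose k : ℚ) * ((k + m).choose ν) * ((k + m - ν).choose (m - ν - 1)) *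
        (Polynomial.bernoulli (k + 1)).eval x
    = (1 / 2) * ∑ j ∈ Finset.range (m + 1),
        (-1 : ℚ) ^ (j + m) * (m.choose j) * ((j + m - 1).choose ν) *
          ((j + m - ν - 1).choose (m - ν - 1)) * (j + m) * x ^ j :=
  alzer_kwong_extension_2_general m ν hν x
end

section
/- For every positive integer m, natural numbers ν, ℓ with 0 ≤ ν ≤ m−1 and 0 ≤ ℓ ≤ m−ν−1, and every rational x, one has ∑_{k=0, k+m odd}^{m-1} C(m,k)·C(k+m,ν)·C(k+m−ν, ℓ)·B_{k+m−ν−ℓ}(x) = (1/2)·∑_{j=0}^{m} (−1)^{j+m}·C(m,j)·C(j+m−1,ν)·C(j+m−ν−1, ℓ)·(j+m)·x^{j+m−ν−ℓ−1}, where the sum on the left runs only over those indices k in {0,…,m−1} for which k+m is odd. -/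
open Finset Polynomial

lemma binom_alt (m i : ℕ) :
    ∑ j ∈ range (m+1), (-1:ℚ)^j * m.choose j * (m+j).choose i
      = if m ≤ i then (-1:ℚ)^m * m.choose (i - m) else 0 := by
  have key : ((-X:ℚ[X])^m) * (1+X)^m
      = ∑ j ∈ range (m+1), ((-1:ℚ)^j * m.choose j) • (1+X)^(m+j) := by
    have h0 : (-X:ℚ[X])^m = (-(1+X)+1)^m := by ring_nf
    rw [h0, add_pow, Finset.sum_mul]
    refine Finset.sum_congr rfl fun j hj => ?_
    rw [neg_pow (1+X : ℚ[X]) j, smul_eq_C_mul, C_mul, C_pow, C_eq_natCast]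
    simp only [map_neg, map_one]
    ring
  have h1 := congrArg (fun p => Polynomial.coeff p i) key
  simp only [finset_sum_coeff, coeff_smul, coeff_one_add_X_pow, smul_eq_mul] at h1
  rw [← h1]
  have h2 : ((-X:ℚ[X])^m) * (1+X)^m = C ((-1:ℚ)^m) * (X^m * (1+X)^m) := by
    rw [neg_pow]; rw [map_pow, map_neg, map_one]; ring
  rw [h2, coeff_C_mul, coeff_X_pow_mul']
  split_ifs with h
  · rw [coeff_one_add_X_pow]
  · ring

lemma iter_deriv_bernoulli (n t : ℕ) :
    derivative^[t] (Polynomial.bernoulli n)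
      = (n.descFactorial t : ℚ) • Polynomial.bernoulli (n - t) := by
  induction t with
  | zero => simp
  | succ t ih =>
    rw [Function.iterate_succ_apply', ih, derivative_smul,
      Polynomial.derivative_bernoulli, Nat.descFactorial_succ]
    rw [show n - t - 1 = n - (t+1) from by omega]
    rw [smul_eq_C_mul, smul_eq_C_mul, ← C_eq_natCast]
    push_cast
    rw [map_mul]
    ring

lemma base_ak (m : ℕ) (hm : 0 < m) :
    ∑ j ∈ range (m+1), ((-1:ℚ)^(j+m) * m.choose j) • ((j+m : ℚ) • (X:ℚ[X])^(j+m-1))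
    = (2:ℚ) • ∑ k ∈ (range m).filter (fun k => Odd (k + m)),
        (m.choose k : ℚ) • Polynomial.bernoulli (k+m) := by
  have E : ∀ j ∈ range (m+1),
      (j+m:ℚ) • (X:ℚ[X])^(j+m-1)
        = (∑ i ∈ range (2*m+1), ((j+m).choose i : ℚ) • Polynomial.bernoulli i)
          - Polynomial.bernoulli (j+m) := by
    intro j hj
    rw [mem_range] at hj
    have h1 : j + m - 1 + 1 = j + m := by omega
    have h2 := Polynomial.sum_bernoulli (j+m-1)
    rw [h1] at h2
    have h3 : ((j+m-1 : ℕ) : ℚ) + 1 = ((j+m : ℕ) : ℚ) := by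
      rw [← h1]; push_cast; ring
    rw [h3, ← smul_X_eq_monomial] at h2
    have h4 := Finset.sum_range_add_sum_Ico
      (fun i => (((j+m).choose i : ℚ)) • Polynomial.bernoulli i)
      (show j + m ≤ 2*m+1 by omega)
    have h5 : ∑ i ∈ Ico (j+m) (2*m+1), (((j+m).choose i : ℚ)) • Polynomial.bernoulli i
        = Polynomial.bernoulli (j+m) := by
      rw [Finset.sum_eq_single (j+m)]
      · simp
      · intro i hi hne
        have hlt : j + m < i := lt_of_le_of_ne (mem_Ico.1 hi).1 (Ne.symm hne)
        rw [Nat.choose_eq_zero_of_lt hlt]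
        simp
      · intro h; exact absurd (mem_Ico.2 ⟨le_refl _, by omega⟩) h
    rw [← h4, h2, h5]
    push_cast
    ring
  have step1 : ∀ j ∈ range (m+1),
      ((-1:ℚ)^(j+m) * m.choose j) • ((j+m:ℚ) • (X:ℚ[X])^(j+m-1))
        = (∑ i ∈ range (2*m+1),
            ((-1:ℚ)^(j+m) * m.choose j * (j+m).choose i) • Polynomial.bernoulli i)
          - ((-1:ℚ)^(j+m) * m.choose j) • Polynomial.bernoulli (j+m) := by
    intro j hj
    rw [E j hj, smul_sub, Finset.smul_sum]
    simp_rw [smul_smul]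
  rw [Finset.sum_congr rfl step1, Finset.sum_sub_distrib, Finset.sum_comm]
  simp_rw [← Finset.sum_smul]
  have inner : ∀ i, (∑ j ∈ range (m+1), (-1:ℚ)^(j+m) * m.choose j * (j+m).choose i)
      = if m ≤ i then (m.choose (i-m) : ℚ) else 0 := by
    intro i
    have hfac : ∑ j ∈ range (m+1), (-1:ℚ)^(j+m) * m.choose j * (j+m).choose i
        = (-1:ℚ)^m * ∑ j ∈ range (m+1), (-1:ℚ)^j * m.choose j * (m+j).choose i := by
      rw [Finset.mul_sum]
      refine Finset.sum_congr rfl fun j _ => ?_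
      rw [add_comm j m]
      ring
    rw [hfac, binom_alt]
    have hsq : (-1:ℚ)^m * (-1:ℚ)^m = 1 := by
      rw [← pow_add, ← two_mul, pow_mul]; norm_num
    split_ifs with h
    · rw [← mul_assoc, hsq, one_mul]
    · rw [mul_zero]
  simp_rw [inner]
  have split1 : ∑ i ∈ range (2*m+1),
      (if m ≤ i then (m.choose (i-m) : ℚ) else 0) • Polynomial.bernoulli i
      = ∑ k ∈ range (m+1), (m.choose k : ℚ) • Polynomial.bernoulli (k+m) := by
    rw [← Finset.sum_range_add_sum_Ico _ (show m ≤ 2*m+1 by omega)]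
    rw [Finset.sum_eq_zero (fun i hi => by
      rw [mem_range] at hi
      rw [if_neg (by omega), zero_smul]), zero_add]
    rw [Finset.sum_Ico_eq_sum_range]
    rw [show 2*m+1-m = m+1 by omega]
    refine Finset.sum_congr rfl fun k hk => ?_
    rw [if_pos (by omega), Nat.add_sub_cancel_left, add_comm m k]
  rw [split1, ← Finset.sum_sub_distrib]
  simp_rw [← sub_smul]
  rw [Finset.sum_range_succ]
  have hmm : ((m.choose m : ℚ) - (-1:ℚ)^(m+m) * m.choose m) = 0 := by
    have : (-1:ℚ)^(m+m) = 1 := Even.neg_one_pow ⟨m, rfl⟩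
    rw [this]; ring
  rw [hmm, zero_smul, add_zero, Finset.smul_sum, Finset.sum_filter]
  refine Finset.sum_congr rfl fun k hk => ?_
  by_cases hodd : Odd (k + m)
  · rw [if_pos hodd, hodd.neg_one_pow, smul_smul]
    ring_nf
  · rw [if_neg hodd, (Nat.not_odd_iff_even.mp hodd).neg_one_pow]
    simp

theorem alzer_kwong_extension_3 (m : ℕ) (hm : 0 < m) (ν ℓ : ℕ) (hν : ν + 1 ≤ m)
    (hℓ : ℓ + ν + 1 ≤ m) (x : ℚ) :
    ∑ k ∈ (Finset.range m).filter (fun k => Odd (k + m)),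
      (m.choose k : ℚ) * ((k + m).choose ν) * ((k + m - ν).choose ℓ) *
        (Polynomial.bernoulli (k + m - ν - ℓ)).eval x
    = (1 / 2) * ∑ j ∈ Finset.range (m + 1),
        (-1 : ℚ) ^ (j + m) * (m.choose j) * ((j + m - 1).choose ν) *
          ((j + m - ν - 1).choose ℓ) * (j + m) * x ^ (j + m - ν - ℓ - 1) := by
  have B := base_ak m hm
  have key := congrArg (fun p : ℚ[X] => Polynomial.eval x ((Polynomial.derivative)^[ν+ℓ] p)) B
  simp only [Polynomial.iterate_derivative_sum, Polynomial.iterate_derivative_smul,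
    Polynomial.iterate_derivative_X_pow_eq_smul, iter_deriv_bernoulli,
    Polynomial.eval_finset_sum, Polynomial.eval_smul, Polynomial.eval_pow, Polynomial.eval_X,
    smul_eq_mul] at key
  have hdf : ∀ n : ℕ, ((n.descFactorial (ν+ℓ) : ℕ) : ℚ)
      = ((ν.factorial : ℚ) * n.choose ν) * ((ℓ.factorial : ℚ) * (n - ν).choose ℓ) := by
    intro n
    rw [← Nat.descFactorial_mul_descFactorial (show ν ≤ ν + ℓ from Nat.le_add_right ν ℓ),
      Nat.add_sub_cancel_left, Nat.descFactorial_eq_factorial_mul_choose,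
      Nat.descFactorial_eq_factorial_mul_choose]
    push_cast
    ring
  have hf2 : ((2:ℚ) * ((ν.factorial : ℚ) * (ℓ.factorial : ℚ))) ≠ 0 := by positivity
  apply mul_left_cancel₀ (a := (2:ℚ) * ((ν.factorial : ℚ) * (ℓ.factorial : ℚ))) hf2
  calc ((2:ℚ) * ((ν.factorial : ℚ) * (ℓ.factorial : ℚ))) *
        ∑ k ∈ (Finset.range m).filter (fun k => Odd (k + m)),
          (m.choose k : ℚ) * ((k + m).choose ν) * ((k + m - ν).choose ℓ) *
            (Polynomial.bernoulli (k + m - ν - ℓ)).eval x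
      = 2 * ∑ k ∈ (Finset.range m).filter (fun k => Odd (k + m)),
          (m.choose k : ℚ) *
            (((k + m).descFactorial (ν + ℓ) : ℚ) *
              Polynomial.eval x (Polynomial.bernoulli (k + m - (ν + ℓ)))) := by
        rw [mul_assoc, Finset.mul_sum]
        congr 1
        refine Finset.sum_congr rfl fun k hk => ?_
        rw [show k + m - (ν + ℓ) = k + m - ν - ℓ from (Nat.sub_sub _ _ _).symm, hdf (k+m)]
        ring
    _ = ∑ j ∈ range (m + 1),
          (-1:ℚ) ^ (j + m) * (m.choose j) *
            (((j:ℚ) + m) * (((j + m - 1).descFactorial (ν + ℓ) : ℚ) *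
              x ^ (j + m - 1 - (ν + ℓ)))) := key.symm
    _ = ((2:ℚ) * ((ν.factorial : ℚ) * (ℓ.factorial : ℚ))) *
        ((1 / 2) * ∑ j ∈ Finset.range (m + 1),
          (-1 : ℚ) ^ (j + m) * (m.choose j) * ((j + m - 1).choose ν) *
            ((j + m - ν - 1).choose ℓ) * (j + m) * x ^ (j + m - ν - ℓ - 1)) := by
        rw [show ((2:ℚ) * ((ν.factorial : ℚ) * (ℓ.factorial : ℚ))) *
            ((1/2) * ∑ j ∈ Finset.range (m + 1),
              (-1 : ℚ) ^ (j + m) * (m.choose j) * ((j + m - 1).choose ν) *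
                ((j + m - ν - 1).choose ℓ) * (j + m) * x ^ (j + m - ν - ℓ - 1))
          = ∑ j ∈ Finset.range (m + 1),
              ((ν.factorial : ℚ) * (ℓ.factorial : ℚ)) *
              ((-1 : ℚ) ^ (j + m) * (m.choose j) * ((j + m - 1).choose ν) *
                ((j + m - ν - 1).choose ℓ) * (j + m) * x ^ (j + m - ν - ℓ - 1)) from by
            rw [show ((2:ℚ) * ((ν.factorial : ℚ) * (ℓ.factorial : ℚ))) *
                ((1/2) * ∑ j ∈ Finset.range (m + 1),
                  (-1 : ℚ) ^ (j + m) * (m.choose j) * ((j + m - 1).choose ν) *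
                    ((j + m - ν - 1).choose ℓ) * (j + m) * x ^ (j + m - ν - ℓ - 1))
              = ((ν.factorial : ℚ) * (ℓ.factorial : ℚ)) *
                ∑ j ∈ Finset.range (m + 1),
                  (-1 : ℚ) ^ (j + m) * (m.choose j) * ((j + m - 1).choose ν) *
                    ((j + m - ν - 1).choose ℓ) * (j + m) * x ^ (j + m - ν - ℓ - 1) from by ring,
              Finset.mul_sum]]
        refine Finset.sum_congr rfl fun j hj => ?_
        rw [hdf (j+m-1),
          show j + m - 1 - ν = j + m - ν - 1 from by omega,
          show j + m - 1 - (ν + ℓ) = j + m - ν - ℓ - 1 from by omega]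
        push_cast
        ring
end

section
/- (Alzer–Kwong) For every positive integer m and every natural number ν with 0 ≤ ν ≤ m, one has ∑_{k=0, k+m odd}^{m-1} C(m,k)·C(k+m,ν)·C(k+m−ν, m−ν)·B_k = (−1)^{m+1}·(m(m+1)/2)·C(m,ν), where the sum on the left runs only over those indices k in {0,…,m−1} for which k+m is odd. -/
/-!
Since `C(k+m,ν) C(k+m-ν,m-ν) = C(k+m,m) C(m,ν)`, it suffices to treat `ν = m`. As `B_k = 0` for
odd `k > 1`, the odd-indexed part of `∑_{k ≤ m} C(m,k) C(k+m,m) B_k` is its `k = 1` term, which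
settles even `m`. For odd `m` the whole sum `U` vanishes: substituting the reflection
`(-1)^k B_k = ∑_j C(k,j) B_j` and summing over `k` first, the alternating identity
`∑_k (-1)^k C(m,k) C(k+m,m) C(k,j) = (-1)^m C(m,j) C(j+m,m)` (an `(m-j)`-th forward difference of
`x ↦ C(x,m)`) gives `U = (-1)^m U`.
-/

open Finset

theorem sum_range_succ_choose_mul_bernoulli (k : ℕ) :
    ∑ j ∈ range (k + 1), (k.choose j : ℚ) * bernoulli j = (-1) ^ k * bernoulli k := by
  rw [← bernoulli'_eq_bernoulli, sum_range_succ, sum_bernoulli, Nat.choose_self, Nat.cast_one,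
    one_mul]
  rcases eq_or_ne k 1 with rfl | hk
  · norm_num [bernoulli_one, bernoulli'_one]
  · simp [hk, bernoulli_eq_bernoulli'_of_ne_one hk]

theorem alternating_sum_choose_mul_choose_add (n j a : ℕ) :
    ∑ i ∈ range (n + 1), (-1 : ℤ) ^ i * n.choose i * (a + i).choose (n + j)
      = (-1) ^ n * a.choose j := by
  have h := fwdDiff_iter_eq_sum_shift (h := 1) (fun x ↦ x.choose (n + j) : ℕ → ℤ) n a
  simp only [fwdDiff_iter_choose] at h
  rw [h, mul_sum]
  refine sum_congr rfl fun i hi ↦ ?_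
  have hsign : (-1 : ℤ) ^ i = (-1) ^ n * (-1) ^ (n - i) := by
    rw [← pow_add, show n + (n - i) = i + 2 * (n - i) by grind, pow_add, pow_mul, neg_one_sq,
      one_pow, mul_one]
  simp only [smul_eq_mul, mul_one, hsign]
  ring

theorem alternating_sum_choose_mul_choose_add_mul_choose {m j : ℕ} (hj : j ≤ m) :
    ∑ k ∈ range (m + 1), (-1 : ℤ) ^ k * m.choose k * (k + m).choose m * k.choose j
      = (-1) ^ m * m.choose j * (j + m).choose m := by
  rw [show m + 1 = j + (m - j + 1) by omega, sum_range_add,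
    sum_eq_zero fun k hk ↦ by simp [Nat.choose_eq_zero_of_lt (mem_range.1 hk)], zero_add]
  have hterm : ∀ i ∈ range (m - j + 1),
      (-1 : ℤ) ^ (j + i) * m.choose (j + i) * (j + i + m).choose m * (j + i).choose j
        = (-1) ^ j * m.choose j *
          ((-1) ^ i * (m - j).choose i * (m + j + i).choose (m - j + j)) := by
    intro i _
    have hchoose : (m.choose (j + i) : ℤ) * (j + i).choose j = m.choose j * (m - j).choose i := by
      exact_mod_cast Nat.add_sub_cancel_left j i ▸ Nat.choose_mul (n := m) (Nat.le_add_right j i)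
    rw [Nat.sub_add_cancel hj, pow_add, show j + i + m = m + j + i by ring]
    linear_combination ((-1) ^ j * (-1) ^ i * ((m + j + i).choose m : ℤ)) * hchoose
  have hsign : (-1 : ℤ) ^ j * (-1) ^ (m - j) = (-1) ^ m := by rw [← pow_add, Nat.add_sub_cancel' hj]
  rw [sum_congr rfl hterm, ← mul_sum, alternating_sum_choose_mul_choose_add, add_comm j m,
    ← Nat.choose_symm_add]
  linear_combination (m.choose j : ℤ) * (m + j).choose m * hsign

theorem sum_choose_mul_choose_add_mul_bernoulli_eq_neg_one_pow_mul (m : ℕ) :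
    ∑ k ∈ range (m + 1), (m.choose k : ℚ) * (k + m).choose m * bernoulli k
      = (-1) ^ m * ∑ k ∈ range (m + 1), (m.choose k : ℚ) * (k + m).choose m * bernoulli k := by
  calc _ = ∑ k ∈ range (m + 1), ∑ j ∈ range (m + 1),
        (-1) ^ k * (m.choose k : ℚ) * (k + m).choose m * k.choose j * bernoulli j := by
        refine sum_congr rfl fun k hk ↦ ?_
        have hk' : k + 1 ≤ m + 1 := mem_range.1 hk
        have hrefl :
            bernoulli k = (-1) ^ k * ∑ j ∈ range (m + 1), (k.choose j : ℚ) * bernoulli j := by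
          rw [← sum_subset (range_subset_range.2 hk') fun j _ hj ↦ by
              simp [Nat.choose_eq_zero_of_lt (not_lt.1 (mt mem_range.2 hj))],
            sum_range_succ_choose_mul_bernoulli, ← mul_assoc, ← pow_add, ← two_mul, pow_mul,
            neg_one_sq, one_pow, one_mul]
        rw [hrefl, mul_sum, mul_sum]
        refine sum_congr rfl fun j _ ↦ ?_
        ring
    _ = ∑ j ∈ range (m + 1), ((∑ k ∈ range (m + 1),
          (-1 : ℤ) ^ k * m.choose k * (k + m).choose m * k.choose j : ℤ) : ℚ) * bernoulli j := by
        rw [sum_comm]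
        refine sum_congr rfl fun j _ ↦ ?_
        push_cast
        rw [sum_mul]
    _ = ∑ j ∈ range (m + 1),
          (((-1) ^ m * m.choose j * (j + m).choose m : ℤ) : ℚ) * bernoulli j := by
        refine sum_congr rfl fun j hj ↦ ?_
        rw [alternating_sum_choose_mul_choose_add_mul_choose (Nat.lt_succ_iff.1 (mem_range.1 hj))]
    _ = _ := by
        rw [mul_sum]
        refine sum_congr rfl fun j _ ↦ ?_
        push_cast
        ring

theorem sum_filter_odd_mul_bernoulli (f : ℕ → ℚ) {s : Finset ℕ} (hs : 1 ∈ s) :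
    ∑ k ∈ s.filter Odd, f k * bernoulli k = -f 1 / 2 := by
  rw [sum_eq_single_of_mem 1 (mem_filter.2 ⟨hs, odd_one⟩), bernoulli_one]
  · ring
  · intro k hk hk1
    have hodd := (mem_filter.1 hk).2
    rw [bernoulli_eq_zero_of_odd hodd (lt_of_le_of_ne hodd.pos (Ne.symm hk1)), mul_zero]

theorem sum_filter_odd_add_choose_mul_choose_add_mul_bernoulli {m : ℕ} (hm : 0 < m) :
    ∑ k ∈ (range m).filter (fun k ↦ Odd (k + m)), (m.choose k : ℚ) * (k + m).choose m * bernoulli k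
      = (-1) ^ (m + 1) * (m * (m + 1) / 2) := by
  have hf1 : (m.choose 1 : ℚ) * (1 + m).choose m = m * (m + 1) := by
    rw [Nat.choose_one_right, add_comm, Nat.choose_succ_self_right]
    push_cast
    ring
  set f : ℕ → ℚ := fun k ↦ (m.choose k : ℚ) * (k + m).choose m
  rcases Nat.even_or_odd m with hm_even | hm_odd
  · have h1 : 1 ∈ range m := mem_range.2 (by obtain ⟨t, rfl⟩ := hm_even; omega)
    rw [filter_congr (q := Odd) fun k _ ↦ by simp [Nat.odd_add, hm_even],
      sum_filter_odd_mul_bernoulli f h1, hm_even.add_one.neg_one_pow]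
    simp only [f, hf1]
    ring
  · have hrange : (range m).filter (fun k ↦ Odd (k + m)) = (range (m + 1)).filter (¬Odd ·) := by
      ext k
      simp only [mem_filter, mem_range, Nat.odd_add, ← Nat.not_odd_iff_even, hm_odd, not_true,
        iff_false]
      refine ⟨fun ⟨hk, he⟩ ↦ ⟨by omega, he⟩, fun ⟨hk, he⟩ ↦ ⟨?_, he⟩⟩
      exact lt_of_le_of_ne (Nat.lt_succ_iff.1 hk) fun h ↦ he (h ▸ hm_odd)
    have hU := sum_choose_mul_choose_add_mul_bernoulli_eq_neg_one_pow_mul m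
    have hsplit := sum_filter_add_sum_filter_not (range (m + 1)) Odd fun k ↦ f k * bernoulli k
    rw [sum_filter_odd_mul_bernoulli f (by simpa using hm)] at hsplit
    rw [hm_odd.neg_one_pow] at hU
    rw [hrange, hm_odd.add_one.neg_one_pow]
    simp only [f, hf1] at hsplit ⊢
    linarith

theorem alzer_kwong_numbers_1 (m : ℕ) (hm : 0 < m) (ν : ℕ) (hν : ν ≤ m) :
    ∑ k ∈ (Finset.range m).filter (fun k => Odd (k + m)),
      (m.choose k : ℚ) * ((k + m).choose ν) * ((k + m - ν).choose (m - ν)) * bernoulli k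
    = (-1 : ℚ) ^ (m + 1) * (m * (m + 1) / 2) * (m.choose ν) := by
  calc _ = (∑ k ∈ (range m).filter (fun k ↦ Odd (k + m)),
          (m.choose k : ℚ) * (k + m).choose m * bernoulli k) * m.choose ν := by
        rw [sum_mul]
        refine sum_congr rfl fun k _ ↦ ?_
        have hfactor : ((k + m).choose m : ℚ) * m.choose ν
            = (k + m).choose ν * (k + m - ν).choose (m - ν) := by
          exact_mod_cast Nat.choose_mul (n := k + m) hν
        linear_combination -(m.choose k : ℚ) * bernoulli k * hfactor
    _ = _ := by rw [sum_filter_odd_add_choose_mul_choose_add_mul_bernoulli hm]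
end

section
/- (Alzer–Kwong) For every positive integer m and natural numbers ν, ℓ with 0 ≤ ν ≤ m and 0 ≤ ℓ ≤ m−ν−2, one has ∑_{k=0, k+m odd}^{m-1} C(m,k)·C(k+m,ν)·C(k+m−ν, ℓ)·B_{k+m−ν−ℓ} = 0, where the sum runs only over those indices k in {0,…,m−1} for which k+m is odd. -/
/-!
Let `G_m = ∑_{k ≤ m} C(m,k) B_{k+m}(X)`. Since `B_n(1 + x) = B_n(x) + n x^(n-1)`, the difference
`G_m(1 + x) - G_m(x)` is the derivative of `(x (1 + x))^m`, which is odd under `x ↦ -1 - x`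
because `(x (1 + x))^m` is even under it. Hence `G_m(x) - G_m(-x)` is `1`-periodic and vanishes
at `0`, hence on `ℤ`, so `G_m` is an even polynomial and its odd coefficients
`∑_k C(m,k) C(k+m,j) B_{k+m-j}` vanish. The sum of the theorem is `C(ν+ℓ,ν)` times the part of
such a coefficient, `j = ν + ℓ`, with `k + m` odd; the remaining terms, and when `j` is even all
terms, carry a Bernoulli number of odd index `≥ 3`.
-/

open Finset

namespace Polynomial

variable {R : Type*} [CommRing R] [IsDomain R] [CharZero R]

theorem coeff_eq_zero_of_comp_neg_X_eq_self {p : R[X]} (hp : p.comp (-X) = p) {j : ℕ}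
    (hj : Odd j) : p.coeff j = 0 := by
  rw [show (-X : R[X]) = C (-1) * X by simp] at hp
  have h := congrArg (coeff · j) hp
  simp only [comp_C_mul_X_coeff, hj.neg_one_pow, mul_neg_one] at h
  exact CharZero.neg_eq_self_iff.mp h

theorem comp_neg_X_eq_self_of_comp_one_add_X {p q : R[X]} (hp : p.comp (1 + X) = p + q)
    (hq : q.comp (-1 - X) = -q) : p.comp (-X) = p := by
  have step (x : R) : p.eval (1 + x) = p.eval x + q.eval x := by
    simpa using congrArg (eval x) hp
  have reflect (x : R) : q.eval (-1 - x) = -q.eval x := by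
    simpa using congrArg (eval x) hq
  have even_at_nat (n : ℕ) : p.eval (-n : R) = p.eval (n : R) := by
    induction n with
    | zero => simp
    | succ n ih =>
      have h := step (-1 - n)
      rw [show 1 + (-1 - n : R) = -n by ring, reflect] at h
      rw [Nat.cast_succ, add_comm, step, ← ih, h, neg_add', neg_sub_comm]
      ring
  apply eq_of_infinite_eval_eq
  refine Set.Infinite.mono ?_ (Set.infinite_range_of_injective (Nat.cast_injective (R := R)))
  rintro _ ⟨n, rfl⟩
  simpa using even_at_nat n

theorem X_mul_one_add_X_pow {S : Type*} [CommSemiring S] (m : ℕ) :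
    (X * (1 + X)) ^ m = ∑ k ∈ range (m + 1), C (m.choose k : S) * X ^ (k + m) := by
  rw [mul_pow, add_comm, add_pow, mul_sum]
  refine sum_congr rfl fun k _ => ?_
  rw [one_pow, mul_one, ← C_eq_natCast, pow_add]
  ring

theorem derivative_X_mul_one_add_X_pow_comp_neg_one_sub_X {S : Type*} [CommRing S] (m : ℕ) :
    (derivative ((X * (1 + X)) ^ m : S[X])).comp (-1 - X) = -derivative ((X * (1 + X)) ^ m) := by
  have symm : ((X * (1 + X)) ^ m : S[X]).comp (-1 - X) = (X * (1 + X)) ^ m := by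
    simp only [pow_comp, mul_comp, add_comp, X_comp, one_comp]
    ring
  have h := congrArg derivative symm
  rw [derivative_comp] at h
  simp only [derivative_sub, derivative_neg, derivative_one, derivative_X] at h
  linear_combination -h

noncomputable def bernoulliChooseSum (m : ℕ) : ℚ[X] :=
  ∑ k ∈ range (m + 1), C (m.choose k : ℚ) * bernoulli (k + m)

theorem bernoulliChooseSum_comp_one_add_X (m : ℕ) :
    (bernoulliChooseSum m).comp (1 + X) =
      bernoulliChooseSum m + derivative ((X * (1 + X)) ^ m) := by
  rw [X_mul_one_add_X_pow, derivative_sum, bernoulliChooseSum, sum_comp, ← sum_add_distrib]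
  refine sum_congr rfl fun k _ => ?_
  simp only [mul_comp, C_comp, bernoulli_comp_one_add_X, derivative_C_mul, derivative_X_pow,
    nsmul_eq_mul, ← C_eq_natCast]
  ring

theorem bernoulliChooseSum_comp_neg_X (m : ℕ) :
    (bernoulliChooseSum m).comp (-X) = bernoulliChooseSum m :=
  comp_neg_X_eq_self_of_comp_one_add_X (bernoulliChooseSum_comp_one_add_X m)
    (derivative_X_mul_one_add_X_pow_comp_neg_one_sub_X m)

theorem coeff_bernoulliChooseSum {m j : ℕ} (hj : j ≤ m) :
    (bernoulliChooseSum m).coeff j =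
      ∑ k ∈ range (m + 1),
        (m.choose k : ℚ) * (k + m).choose j * _root_.bernoulli (k + m - j) := by
  simp only [bernoulliChooseSum, finsetSum_coeff, coeff_C_mul, coeff_bernoulli]
  refine sum_congr rfl fun k _ => ?_
  rw [if_pos (by omega)]
  ring

end Polynomial

theorem sum_choose_mul_choose_mul_bernoulli_eq_zero {m j : ℕ} (hj : Odd j) (hjm : j ≤ m) :
    ∑ k ∈ range (m + 1), (m.choose k : ℚ) * (k + m).choose j * bernoulli (k + m - j) = 0 := by
  rw [← Polynomial.coeff_bernoulliChooseSum hjm]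
  exact Polynomial.coeff_eq_zero_of_comp_neg_X_eq_self
    (Polynomial.bernoulliChooseSum_comp_neg_X m) hj

theorem alzer_kwong_numbers_3_general (m : ℕ) (ν ℓ : ℕ)
    (hℓ : ℓ + ν + 2 ≤ m) :
    ∑ k ∈ (Finset.range m).filter (fun k => Odd (k + m)),
      (m.choose k : ℚ) * ((k + m).choose ν) * ((k + m - ν).choose ℓ) *
        bernoulli (k + m - ν - ℓ) = 0 := by
  have regroup (k : ℕ) : (m.choose k : ℚ) * ((k + m).choose ν) * ((k + m - ν).choose ℓ) *
      bernoulli (k + m - ν - ℓ) = (ν + ℓ).choose ν *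
        ((m.choose k : ℚ) * (k + m).choose (ν + ℓ) * bernoulli (k + m - (ν + ℓ))) := by
    have h := Nat.choose_mul (n := k + m) (Nat.le_add_right ν ℓ)
    rw [Nat.add_sub_cancel_left] at h
    rw [Nat.sub_sub, mul_assoc (m.choose k : ℚ), ← Nat.cast_mul, ← h]
    push_cast
    ring
  simp_rw [regroup, ← mul_sum]
  set j := ν + ℓ
  have bernoulli_vanishes (k : ℕ) (h : Odd (k + m - j)) : bernoulli (k + m - j) = 0 :=
    bernoulli_eq_zero_of_odd h (by omega)
  rcases Nat.even_or_odd j with hj | hj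
  · refine mul_eq_zero_of_right _ (sum_eq_zero fun k hk => ?_)
    rw [bernoulli_vanishes k (Nat.Odd.sub_even (by omega) (mem_filter.mp hk).2 hj), mul_zero]
  · rw [sum_subset (filter_subset _ _ |>.trans (range_subset_range.mpr m.le_succ)),
      sum_choose_mul_choose_mul_bernoulli_eq_zero hj (by omega), mul_zero]
    intro k hk hk'
    have hkm : Even (k + m) := by
      rw [mem_range, Nat.lt_succ_iff] at hk
      rcases hk.lt_or_eq with hk | rfl
      · simpa [hk] using hk'
      · exact ⟨k, rfl⟩
    rw [bernoulli_vanishes k (Nat.Even.sub_odd (by omega) hkm hj), mul_zero]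

theorem alzer_kwong_numbers_3 (m : ℕ) (hm : 0 < m) (ν ℓ : ℕ) (hν : ν ≤ m)
    (hℓ : ℓ + ν + 2 ≤ m) :
    ∑ k ∈ (Finset.range m).filter (fun k => Odd (k + m)),
      (m.choose k : ℚ) * ((k + m).choose ν) * ((k + m - ν).choose ℓ) *
        bernoulli (k + m - ν - ℓ) = 0 :=
  alzer_kwong_numbers_3_general m ν ℓ hℓ
end

section
/- (Wu–Sun–Pan) For all positive integers m and n and every rational x, one has ∑_{k=0}^{m} C(m,k)·B_{n+k}(x) = (−1)^{n+m}·∑_{k=0}^{n} C(n,k)·B_{m+k}(−x). -/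
/-!
Write `S(m, n; x) = ∑_{k ≤ m} C(m,k) B_{n+k}(x)`. Pascal's rule gives
`S(m+1, n) = S(m, n) + S(m, n+1)`, and the right-hand side `(-1)^(n+m) S(n, m; -x)` obeys the
same recurrence in `m` (apply it in the other index). So it suffices to compare the two at `m = 0`,
where `S(n, 0; -x) = B_n(1 - x) = (-1)^n B_n(x)` by the addition formula `∑ C(n,k) B_k(y) = B_n(1 + y)`
and the reflection formula.
-/

open Finset

theorem Finset.sum_range_succ_choose_mul {R : Type*} [NonAssocSemiring R] (m : ℕ) (f : ℕ → R) :
    ∑ k ∈ range (m + 2), ((m + 1).choose k : R) * f k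
      = ∑ k ∈ range (m + 1), (m.choose k : R) * (f k + f (k + 1)) := by
  have shifted : ∑ k ∈ range (m + 1), (m.choose (k + 1) : R) * f (k + 1) + f 0
      = ∑ k ∈ range (m + 1), (m.choose k : R) * f k := by
    simpa [Nat.choose_succ_self] using
      (sum_range_succ' (fun k ↦ (m.choose k : R) * f k) (m + 1)).symm.trans
        (sum_range_succ _ (m + 1))
  rw [sum_range_succ']
  simp only [Nat.choose_succ_succ, Nat.cast_add, add_mul, mul_add, sum_add_distrib,
    Nat.choose_zero_right, Nat.cast_one, one_mul, ← shifted]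
  abel

theorem Polynomial.sum_range_choose_mul_bernoulli_eval (n : ℕ) (x : ℚ) :
    ∑ k ∈ range (n + 1), (n.choose k : ℚ) * (Polynomial.bernoulli k).eval x
      = (Polynomial.bernoulli n).eval (1 + x) := by
  cases n with
  | zero => simp
  | succ n =>
    have h := congrArg (Polynomial.eval x) (Polynomial.sum_bernoulli n)
    simp only [Polynomial.eval_finsetSum, Polynomial.eval_smul, Polynomial.eval_monomial,
      smul_eq_mul] at h
    rw [sum_range_succ, h, Polynomial.bernoulli_eval_one_add, Nat.choose_self]
    push_cast
    ring

noncomputable def bernoulliChooseSum (m n : ℕ) (x : ℚ) : ℚ :=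
  ∑ k ∈ range (m + 1), (m.choose k : ℚ) * (Polynomial.bernoulli (n + k)).eval x

theorem bernoulliChooseSum_zero_left (n : ℕ) (x : ℚ) :
    bernoulliChooseSum 0 n x = (Polynomial.bernoulli n).eval x := by
  simp [bernoulliChooseSum]

theorem bernoulliChooseSum_succ_left (m n : ℕ) (x : ℚ) :
    bernoulliChooseSum (m + 1) n x
      = bernoulliChooseSum m n x + bernoulliChooseSum m (n + 1) x := by
  simp only [bernoulliChooseSum, sum_range_succ_choose_mul, mul_add, sum_add_distrib,
    add_right_comm n 1, add_assoc n]

theorem bernoulliChooseSum_zero_right_neg (m : ℕ) (x : ℚ) :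
    bernoulliChooseSum m 0 (-x) = (-1) ^ m * (Polynomial.bernoulli m).eval x := by
  simp only [bernoulliChooseSum, zero_add]
  rw [Polynomial.sum_range_choose_mul_bernoulli_eval, ← sub_eq_add_neg,
    Polynomial.bernoulli_eval_one_sub]

theorem bernoulliChooseSum_eq_neg_one_pow_mul (m n : ℕ) (x : ℚ) :
    bernoulliChooseSum m n x = (-1) ^ (n + m) * bernoulliChooseSum n m (-x) := by
  induction m generalizing n with
  | zero =>
    rw [bernoulliChooseSum_zero_left, bernoulliChooseSum_zero_right_neg, add_zero, ← mul_assoc,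
      ← pow_add, Even.neg_one_pow ⟨n, rfl⟩, one_mul]
  | succ m ih =>
    rw [bernoulliChooseSum_succ_left, ih, ih, bernoulliChooseSum_succ_left n]
    ring

theorem wu_sun_pan_general (m n : ℕ) (x : ℚ) :
    ∑ k ∈ Finset.range (m + 1), (m.choose k : ℚ) * (Polynomial.bernoulli (n + k)).eval x
    = (-1 : ℚ) ^ (n + m) *
        ∑ k ∈ Finset.range (n + 1), (n.choose k : ℚ) * (Polynomial.bernoulli (m + k)).eval (-x) :=
  bernoulliChooseSum_eq_neg_one_pow_mul m n x

theorem wu_sun_pan (m n : ℕ) (hm : 0 < m) (hn : 0 < n) (x : ℚ) :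
    ∑ k ∈ Finset.range (m + 1), (m.choose k : ℚ) * (Polynomial.bernoulli (n + k)).eval x
    = (-1 : ℚ) ^ (n + m) *
        ∑ k ∈ Finset.range (n + 1), (n.choose k : ℚ) * (Polynomial.bernoulli (m + k)).eval (-x) :=
  wu_sun_pan_general m n x
end

section
/- (Sun) For all natural numbers m and n and all rationals x, y, z with x + y + z = 1, one has (−1)^m · ∑_{j=0}^{m} C(m, j)·x^{m−j}·B_{n+j}(y) = (−1)^n · ∑_{k=0}^{n} C(n, k)·x^{n−k}·B_{m+k}(z). -/
open Finset Polynomial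

/-!
Umbrally, `B_k(t) = (B + t)^k`, where the umbra `B` sends `B^k` to the Bernoulli number `B_k`.
Formally this is the linear functional `L : ℚ[X] → ℚ`, `X^k ↦ B_k`, for which
`B_k(t) = L((X + t)^k)`. The left side of the identity is then `(-1)^m L((X+y)^n (X+y+x)^m)` and
the right side `(-1)^n L((X+z)^m (X+z+x)^n)`. The reflection formula `B_k(1-t) = (-1)^k B_k(t)`
says that substituting `X + (1 - t)` into a polynomial has the same effect under `L` as
substituting `-(X + t)`; for `t = x + y`, so that `1 - t = z`, this turns the right side into the
left one.
-/

noncomputable def bernoulliFunctional : ℚ[X] →ₗ[ℚ] ℚ :=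
  lsum fun k => _root_.bernoulli k • LinearMap.id

theorem bernoulliFunctional_C_mul_X_pow (c : ℚ) (k : ℕ) :
    bernoulliFunctional (C c * X ^ k) = c * _root_.bernoulli k := by
  rw [C_mul_X_pow_eq_monomial]
  simp [bernoulliFunctional, mul_comm c]

theorem bernoulliFunctional_C_mul (c : ℚ) (p : ℚ[X]) :
    bernoulliFunctional (C c * p) = c * bernoulliFunctional p := by
  rw [C_mul', map_smul, smul_eq_mul]

theorem bernoulli_eval_eq_bernoulliFunctional (k : ℕ) (t : ℚ) :
    (Polynomial.bernoulli k).eval t = bernoulliFunctional ((X + C t) ^ k) := by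
  simp only [Polynomial.bernoulli, eval_finsetSum, eval_monomial, add_pow, map_sum]
  refine sum_congr rfl fun i _ => ?_
  rw [← C_pow, ← C_eq_natCast, mul_assoc (X ^ i), ← C_mul, X_pow_mul,
    bernoulliFunctional_C_mul_X_pow]
  ring

theorem bernoulliFunctional_comp_eq_of_forall_pow {q r : ℚ[X]}
    (h : ∀ k, bernoulliFunctional (q ^ k) = bernoulliFunctional (r ^ k)) (p : ℚ[X]) :
    bernoulliFunctional (p.comp q) = bernoulliFunctional (p.comp r) := by
  induction p using Polynomial.induction_on' with
  | add p p' hp hp' => simp only [add_comp, map_add, hp, hp']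
  | monomial k c => simp only [monomial_comp, bernoulliFunctional_C_mul, h]

theorem bernoulliFunctional_comp_X_add_C_one_sub (t : ℚ) (p : ℚ[X]) :
    bernoulliFunctional (p.comp (X + C (1 - t))) =
      bernoulliFunctional (p.comp (-(X + C t))) := by
  refine bernoulliFunctional_comp_eq_of_forall_pow (fun k => ?_) p
  rw [← bernoulli_eval_eq_bernoulliFunctional, bernoulli_eval_one_sub, neg_pow (X + C t), ← C_1,
    ← C_neg, ← C_pow, bernoulliFunctional_C_mul, bernoulli_eval_eq_bernoulliFunctional]

theorem sum_choose_mul_pow_mul_bernoulli_eval (m n : ℕ) (a y : ℚ) :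
    ∑ j ∈ range (m + 1), (m.choose j : ℚ) * a ^ (m - j) * (Polynomial.bernoulli (n + j)).eval y
      = bernoulliFunctional ((X + C y) ^ n * (X + C y + C a) ^ m) := by
  simp only [bernoulli_eval_eq_bernoulliFunctional, add_pow _ (C a), mul_sum, map_sum]
  refine sum_congr rfl fun j _ => ?_
  rw [← bernoulliFunctional_C_mul]
  congr 1
  simp only [map_mul, map_pow, map_natCast]
  ring

theorem sun_identity (m n : ℕ) (x y z : ℚ) (hxyz : x + y + z = 1) :
    (-1 : ℚ) ^ m *
      ∑ j ∈ Finset.range (m + 1),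
        (m.choose j : ℚ) * x ^ (m - j) * (Polynomial.bernoulli (n + j)).eval y
    = (-1 : ℚ) ^ n *
        ∑ k ∈ Finset.range (n + 1),
          (n.choose k : ℚ) * x ^ (n - k) * (Polynomial.bernoulli (m + k)).eval z := by
  have hz : z = 1 - (x + y) := by linarith
  have rhs_eq_comp : (X + C z) ^ m * (X + C z + C x) ^ n
      = (X ^ m * (X + C x) ^ n).comp (X + C (1 - (x + y))) := by
    simp [hz]
  have comp_neg : (X ^ m * (X + C x) ^ n).comp (-(X + C (x + y)))
      = C ((-1) ^ (m + n)) * ((X + C y) ^ n * (X + C y + C x) ^ m) := by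
    rw [mul_comp, pow_comp, pow_comp, X_comp, add_comp, X_comp, C_comp,
      show -(X + C (x + y)) + C x = -(X + C y) by simp only [map_add]; ring,
      show -(X + C (x + y)) = -(X + C y + C x) by simp only [map_add]; ring,
      neg_pow (X + C y), neg_pow (X + C y + C x), pow_add, C_mul, C_pow, C_pow, C_neg, C_1]
    ring
  rw [sum_choose_mul_pow_mul_bernoulli_eval, sum_choose_mul_pow_mul_bernoulli_eval, rhs_eq_comp,
    bernoulliFunctional_comp_X_add_C_one_sub, comp_neg, bernoulliFunctional_C_mul, ← mul_assoc,
    ← pow_add, add_left_comm, ← two_mul, pow_add, pow_mul, neg_one_sq, one_pow, mul_one]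
end

section
/- (Kaneko) For every positive integer n, one has ∑_{j=0}^{n+1} C(n+1, j)·(n+j+1)·B_{n+j} = 0; equivalently, writing B̃_k = (k+1)·B_k, one has ∑_{j=0}^{n+1} C(n+1, j)·B̃_{n+j} = 0. -/
/-!
Write `S f m n = ∑ j ≤ m, C(m, j) f(n + j)`. Pascal's rule gives
`S f (m+1) n = S f m n + S f m (n+1)`, so by induction on `m` the symmetry
`S f m n = (-1)^(m+n) S f n m` follows from its case `m = 0`, which for `f = B` is
`B_n(1) = (-1)^n B_n`. Splitting `n + j + 1 = (n + 1) + j` and using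
`j C(n+1, j) = (n+1) C(n, j-1)`, Kaneko's sum becomes `(n + 1) (S B (n+1) n + S B n (n+1))`,
which vanishes by the symmetry since `(n + 1) + n` is odd.
-/

open Finset

section BinomialShiftSum

variable {G : Type*} [AddCommGroup G]

def binomialShiftSum (f : ℕ → G) (m n : ℕ) : G :=
  ∑ j ∈ range (m + 1), m.choose j • f (n + j)

theorem binomialShiftSum_zero_left (f : ℕ → G) (n : ℕ) : binomialShiftSum f 0 n = f n := by
  simp [binomialShiftSum]

theorem binomialShiftSum_succ_left (f : ℕ → G) (m n : ℕ) :
    binomialShiftSum f (m + 1) n = binomialShiftSum f m n + binomialShiftSum f m (n + 1) := by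
  simpa only [binomialShiftSum, ← add_assoc, add_right_comm n]
    using sum_choose_succ_nsmul (fun i _ => f (n + i)) m

theorem binomialShiftSum_symm {f : ℕ → G}
    (hf : ∀ n, f n = (-1 : ℤ) ^ n • binomialShiftSum f n 0) (m n : ℕ) :
    binomialShiftSum f m n = (-1 : ℤ) ^ (m + n) • binomialShiftSum f n m := by
  induction m generalizing n with
  | zero => simpa only [binomialShiftSum_zero_left, zero_add] using hf n
  | succ m ih =>
    rw [binomialShiftSum_succ_left, ih, ih, binomialShiftSum_succ_left f n m,
      show m + (n + 1) = m + n + 1 by omega, show m + 1 + n = m + n + 1 by omega, pow_succ]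
    module

theorem sum_range_mul_choose_smul (f : ℕ → G) (m n : ℕ) :
    ∑ j ∈ range (m + 2), (j * (m + 1).choose j) • f (n + j) =
      (m + 1) • binomialShiftSum f m (n + 1) := by
  rw [sum_range_succ', binomialShiftSum, smul_sum]
  refine (add_eq_left.2 (by simp)).trans (sum_congr rfl fun j _ => ?_)
  rw [mul_comm, ← Nat.add_one_mul_choose_eq, mul_smul, add_right_comm, add_assoc]

end BinomialShiftSum

theorem binomialShiftSum_bernoulli_zero_right (n : ℕ) :
    binomialShiftSum bernoulli n 0 = bernoulli' n := by
  simp only [binomialShiftSum, zero_add, nsmul_eq_mul, sum_range_succ, sum_bernoulli,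
    Nat.choose_self, Nat.cast_one, one_mul]
  rcases eq_or_ne n 1 with rfl | hn
  · norm_num
  · rw [if_neg hn, zero_add, bernoulli_eq_bernoulli'_of_ne_one hn]

theorem bernoulli_eq_neg_one_pow_smul_binomialShiftSum (n : ℕ) :
    bernoulli n = (-1 : ℤ) ^ n • binomialShiftSum bernoulli n 0 := by
  rw [binomialShiftSum_bernoulli_zero_right, bernoulli'_eq_bernoulli, zsmul_eq_mul, ← mul_assoc]
  push_cast
  rw [← mul_pow]
  norm_num

theorem kaneko_general (n : ℕ) :
    ∑ j ∈ Finset.range (n + 2), ((n + 1).choose j : ℚ) * (n + j + 1) * bernoulli (n + j) = 0 := by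
  have hsymm : binomialShiftSum bernoulli (n + 1) n = -binomialShiftSum bernoulli n (n + 1) := by
    rw [binomialShiftSum_symm bernoulli_eq_neg_one_pow_smul_binomialShiftSum,
      show n + 1 + n = 2 * n + 1 by ring, pow_succ, pow_mul]
    simp
  calc ∑ j ∈ range (n + 2), ((n + 1).choose j : ℚ) * (n + j + 1) * bernoulli (n + j)
      = ∑ j ∈ range (n + 2), ((n + 1) * (n + 1).choose j) • bernoulli (n + j)
        + ∑ j ∈ range (n + 2), (j * (n + 1).choose j) • bernoulli (n + j) := by
        rw [← sum_add_distrib]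
        refine sum_congr rfl fun j _ => ?_
        push_cast [nsmul_eq_mul]
        ring
    _ = (n + 1) •
          (binomialShiftSum bernoulli (n + 1) n + binomialShiftSum bernoulli n (n + 1)) := by
        simp_rw [sum_range_mul_choose_smul, mul_smul, ← smul_sum, smul_add, binomialShiftSum]
    _ = 0 := by rw [hsymm, neg_add_cancel, smul_zero]

theorem kaneko (n : ℕ) (hn : 0 < n) :
    ∑ j ∈ Finset.range (n + 2), ((n + 1).choose j : ℚ) * (n + j + 1) * bernoulli (n + j) = 0 :=
  kaneko_general n
end
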